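/- Let 1 ≤ p < ∞, let ρ be a bounded Borel measure on I = [0,1], and assume the p-th discrete absolute moment M_p(φ_σ) = sup_{x∈ℝ} ∑_{k∈ℤ} |x−k|^p φ_σ(x−k) is finite. Then there is a constant C > 0 (depending only on p, φ_σ(1), M_p(φ_σ), and ρ(I)) such that ‖S_n^ρ(|t − x|)(x)‖_{L^p(I,ρ)} ≤ C/n for all n ∈ ℕ, where S_n^ρ(|t − x|)(x) = ∑_{k=0}^n [ (∫_0^1 |t − x| φ_σ(nt−k) dρ(t)) / (∫_0^1 φ_σ(nt−k) dρ(t)) ] · φ_σ(nx−k) / ∑_{k=0}^n φ_σ(nx−k). -/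

import Mathlib

open MeasureTheory Set Filter Topology

noncomputable section

/-- Kernel associated with a sigmoidal function: `φ_σ(x) = (σ(x+1) − σ(x−1))/2`. -/
def phiK (σ : ℝ → ℝ) (x : ℝ) : ℝ := (σ (x + 1) - σ (x - 1)) / 2

/-- `σ` is a (non-decreasing) sigmoidal function. -/
def Sigmoidal (σ : ℝ → ℝ) : Prop :=
  Monotone σ ∧ Tendsto σ atBot (nhds 0) ∧ Tendsto σ atTop (nhds 1)

/-- Strict positivity of a measure on `I = [0,1]`. -/
def StrictlyPositive (ρ : Measure ℝ) : Prop :=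
  ∀ A : Set ℝ, IsOpen A → (A ∩ Icc (0:ℝ) 1).Nonempty → 0 < ρ (A ∩ Icc (0:ℝ) 1)

/-- Standard kernel properties: nonnegativity, `φ_σ(1) > 0`, partition of unity, and
`∑_{k=0}^n φ_σ(nx−k) ≥ φ_σ(1)` on `[0,1]`. -/
def KernelStd (σ : ℝ → ℝ) : Prop :=
  (∀ x, 0 ≤ phiK σ x) ∧ 0 < phiK σ 1 ∧
    (∀ x : ℝ, ∑' k : ℤ, phiK σ (x - (k : ℝ)) = 1) ∧
    ∀ n : ℕ, ∀ x ∈ Icc (0:ℝ) 1,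
      phiK σ 1 ≤ ∑ k ∈ Finset.range (n + 1), phiK σ ((n : ℝ) * x - (k : ℝ))

/-- `‖g‖_{L^p([0,1],ρ)} = (∫₀¹ |g|^p dρ)^{1/p}`. -/
def LpNorm1 (ρ : Measure ℝ) (p : ℝ) (g : ℝ → ℝ) : ℝ :=
  (∫ x in Icc (0:ℝ) 1, |g x| ^ p ∂ρ) ^ (1 / p)

/-- Finiteness of the `p`-th discrete absolute moment
`M_p(φ_σ) = sup_{x∈ℝ} ∑_{k∈ℤ} |x−k|^p φ_σ(x−k)`. -/
def MomentFin (σ : ℝ → ℝ) (p : ℝ) : Prop :=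
  (⨆ x : ℝ, ∑' k : ℤ, ENNReal.ofReal (|x - (k : ℝ)| ^ p * phiK σ (x - (k : ℝ)))) < ⊤

/-- The function `x ↦ S_n^ρ(|t − x|)(x)`. -/
def nnAbsMoment (ρ : Measure ℝ) (σ : ℝ → ℝ) (n : ℕ) (x : ℝ) : ℝ :=
  (∑ k ∈ Finset.range (n + 1),
      ((∫ t in Icc (0:ℝ) 1, |t - x| * phiK σ ((n : ℝ) * t - (k : ℝ)) ∂ρ) /
          ∫ t in Icc (0:ℝ) 1, phiK σ ((n : ℝ) * t - (k : ℝ)) ∂ρ) *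
        phiK σ ((n : ℝ) * x - (k : ℝ))) /
    ∑ k ∈ Finset.range (n + 1), phiK σ ((n : ℝ) * x - (k : ℝ))

/-!
Write `ψ_k(t) = φ_σ(nt - k)`, `D_k = ∫_I ψ_k dρ` and `A_k = ∫_I |nt - k|^p ψ_k dρ`.
Since `|t - x| ≤ (|nt - k| + |nx - k|) / n`, Jensen's inequality for the probability measure
`ψ_k dρ / D_k` gives `(∫_I |t - x| ψ_k dρ / D_k)^p ≤ 2^(p-1) n^(-p) (A_k / D_k + |nx - k|^p)`, and
Jensen's inequality for the convex weights `φ_σ(nx - k) / ∑_j φ_σ(nx - j)`, whose denominator is at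
least `φ_σ(1)`, moves the `p`-th power inside the sum over `k`. Integrating in `x` turns
`A_k / D_k · ψ_k(x)` back into `A_k`, and `∑_k A_k ≤ M_p(φ_σ) ρ(I)`, so
`∫_I |S_n|^p dρ ≤ 2^p M_p(φ_σ) ρ(I) / (φ_σ(1) n^p)`.
-/

open scoped ENNReal

theorem ENNReal.lintegral_mul_rpow_le {α : Type*} [MeasurableSpace α] {μ : Measure α}
    {F W : α → ℝ≥0∞} {p : ℝ} (hp : 1 ≤ p) (hF : AEMeasurable F μ) (hW : AEMeasurable W μ) :
    (∫⁻ t, F t * W t ∂μ) ^ p ≤ (∫⁻ t, W t ∂μ) ^ (p - 1) * ∫⁻ t, F t ^ p * W t ∂μ := by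
  rcases hp.eq_or_lt with rfl | hp
  · simp
  have hpq := Real.HolderConjugate.conjExponent hp
  set q := p.conjExponent
  -- Hölder's inequality for `F` and `1` with respect to the measure with density `W`
  have hHolder := ENNReal.lintegral_mul_le_Lp_mul_Lq (μ.withDensity W) hpq
    (hF.mono' (withDensity_absolutelyContinuous μ W)) (aemeasurable_const (b := 1))
  simp only [Pi.mul_apply, mul_one, ENNReal.one_rpow, lintegral_one,
    withDensity_apply _ MeasurableSet.univ, Measure.restrict_univ] at hHolder
  rw [lintegral_withDensity_eq_lintegral_mul₀ hW hF,
    lintegral_withDensity_eq_lintegral_mul₀ hW (hF.pow_const p)] at hHolder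
  simp only [Pi.mul_apply, mul_comm (W _)] at hHolder
  calc (∫⁻ t, F t * W t ∂μ) ^ p
      ≤ ((∫⁻ t, F t ^ p * W t ∂μ) ^ (1 / p) * (∫⁻ t, W t ∂μ) ^ (1 / q)) ^ p :=
        ENNReal.rpow_le_rpow hHolder (by linarith)
    _ = (∫⁻ t, W t ∂μ) ^ (p - 1) * ∫⁻ t, F t ^ p * W t ∂μ := by
        rw [ENNReal.mul_rpow_of_nonneg _ _ (by linarith), ← ENNReal.rpow_mul, ← ENNReal.rpow_mul,
          one_div_mul_cancel (by linarith), ENNReal.rpow_one, mul_comm]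
        congr 2
        rw [one_div, ← hpq.one_sub_inv]
        field_simp

theorem integral_mul_rpow_le {α : Type*} [MeasurableSpace α] {μ : Measure α} {f w : α → ℝ}
    {p : ℝ} (hp : 1 ≤ p) (hf : 0 ≤ᵐ[μ] f) (hw : 0 ≤ᵐ[μ] w) (hfm : AEMeasurable f μ)
    (hwi : Integrable w μ) (hfw : Integrable (fun t => f t * w t) μ)
    (hfpw : Integrable (fun t => f t ^ p * w t) μ) :
    (∫ t, f t * w t ∂μ) ^ p ≤ (∫ t, w t ∂μ) ^ (p - 1) * ∫ t, f t ^ p * w t ∂μ := by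
  have hp0 : 0 ≤ p := by linarith
  have hfw0 : 0 ≤ᵐ[μ] fun t => f t * w t := by
    filter_upwards [hf, hw] with t hft hwt using mul_nonneg hft hwt
  have hfpw0 : 0 ≤ᵐ[μ] fun t => f t ^ p * w t := by
    filter_upwards [hf, hw] with t hft hwt using mul_nonneg (Real.rpow_nonneg hft p) hwt
  have key := ENNReal.lintegral_mul_rpow_le hp hfm.ennreal_ofReal hwi.aemeasurable.ennreal_ofReal
  rw [← ofReal_integral_eq_lintegral_ofReal hwi hw] at key
  have hwi0 := integral_nonneg_of_ae hw
  rw [← ENNReal.ofReal_le_ofReal_iff (mul_nonneg (Real.rpow_nonneg hwi0 _)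
      (integral_nonneg_of_ae hfpw0)),
    ENNReal.ofReal_mul (Real.rpow_nonneg hwi0 _),
    ← ENNReal.ofReal_rpow_of_nonneg (integral_nonneg_of_ae hfw0) hp0,
    ← ENNReal.ofReal_rpow_of_nonneg hwi0 (by linarith),
    ofReal_integral_eq_lintegral_ofReal hfw hfw0, ofReal_integral_eq_lintegral_ofReal hfpw hfpw0]
  convert key using 2
  · refine lintegral_congr_ae ?_
    filter_upwards [hf] with t hft using ENNReal.ofReal_mul hft
  · refine lintegral_congr_ae ?_
    filter_upwards [hf] with t hft
    rw [ENNReal.ofReal_mul (Real.rpow_nonneg hft p), ENNReal.ofReal_rpow_of_nonneg hft hp0]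

theorem Real.rpow_add_le_mul_rpow_add_rpow {a b : ℝ} (ha : 0 ≤ a) (hb : 0 ≤ b) {p : ℝ}
    (hp : 1 ≤ p) : (a + b) ^ p ≤ 2 ^ (p - 1) * (a ^ p + b ^ p) :=
  mod_cast NNReal.rpow_add_le_mul_rpow_add_rpow ⟨a, ha⟩ ⟨b, hb⟩ hp

theorem Real.rpow_sum_mul_div_sum_le {ι : Type*} (s : Finset ι) {a z : ι → ℝ} {c p : ℝ}
    (ha : ∀ i ∈ s, 0 ≤ a i) (hz : ∀ i ∈ s, 0 ≤ z i) (hc : 0 < c) (hcs : c ≤ ∑ i ∈ s, a i)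
    (hp : 1 ≤ p) :
    ((∑ i ∈ s, z i * a i) / ∑ i ∈ s, a i) ^ p ≤ (∑ i ∈ s, a i * z i ^ p) / c := by
  have hs : 0 < ∑ i ∈ s, a i := hc.trans_le hcs
  have hmean := Real.rpow_arith_mean_le_arith_mean_rpow s (fun i => a i / ∑ j ∈ s, a j) z
    (fun i hi => div_nonneg (ha i hi) hs.le) (by rw [← Finset.sum_div, div_self hs.ne']) hz hp
  simp only [div_mul_eq_mul_div, ← Finset.sum_div] at hmean
  calc ((∑ i ∈ s, z i * a i) / ∑ i ∈ s, a i) ^ p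
      ≤ (∑ i ∈ s, a i * z i ^ p) / ∑ i ∈ s, a i := by simpa only [mul_comm (z _)] using hmean
    _ ≤ (∑ i ∈ s, a i * z i ^ p) / c :=
        div_le_div_of_nonneg_left (Finset.sum_nonneg fun i hi =>
          mul_nonneg (ha i hi) (Real.rpow_nonneg (hz i hi) p)) hc hcs

theorem abs_sub_rpow_le {p : ℝ} (hp : 1 ≤ p) {n : ℝ} (hn : 0 < n) (t x k : ℝ) :
    |t - x| ^ p ≤ 2 ^ (p - 1) / n ^ p * (|n * t - k| ^ p + |n * x - k| ^ p) := by
  have hdist : |t - x| ≤ (|n * t - k| + |n * x - k|) / n := by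
    rw [le_div_iff₀ hn, ← abs_of_pos hn, ← abs_mul, abs_of_pos hn]
    calc |(t - x) * n| = |(n * t - k) - (n * x - k)| := by ring_nf
      _ ≤ |n * t - k| + |n * x - k| := abs_sub _ _
  calc |t - x| ^ p ≤ ((|n * t - k| + |n * x - k|) / n) ^ p :=
        Real.rpow_le_rpow (abs_nonneg _) hdist (by linarith)
    _ = (|n * t - k| + |n * x - k|) ^ p / n ^ p := Real.div_rpow (by positivity) hn.le p
    _ ≤ 2 ^ (p - 1) * (|n * t - k| ^ p + |n * x - k| ^ p) / n ^ p := by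
        gcongr
        exact Real.rpow_add_le_mul_rpow_add_rpow (abs_nonneg _) (abs_nonneg _) hp
    _ = 2 ^ (p - 1) / n ^ p * (|n * t - k| ^ p + |n * x - k| ^ p) := by ring

namespace Sigmoidal

variable {σ : ℝ → ℝ}

theorem nonneg (hσ : Sigmoidal σ) (x : ℝ) : 0 ≤ σ x :=
  le_of_tendsto hσ.2.1 (eventually_atBot.2 ⟨x, fun _ hy => hσ.1 hy⟩)

theorem le_one (hσ : Sigmoidal σ) (x : ℝ) : σ x ≤ 1 :=
  ge_of_tendsto hσ.2.2 (eventually_atTop.2 ⟨x, fun _ hy => hσ.1 hy⟩)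

theorem phiK_nonneg (hσ : Sigmoidal σ) (x : ℝ) : 0 ≤ phiK σ x :=
  div_nonneg (sub_nonneg.2 (hσ.1 (by linarith))) zero_le_two

theorem phiK_le_one (hσ : Sigmoidal σ) (x : ℝ) : phiK σ x ≤ 1 := by
  unfold phiK
  linarith [hσ.le_one (x + 1), hσ.nonneg (x - 1)]

theorem measurable_phiK (hσ : Sigmoidal σ) : Measurable (phiK σ) := by
  have := hσ.1.measurable
  unfold phiK
  fun_prop

end Sigmoidal

def absMoment (σ : ℝ → ℝ) (p : ℝ) : ℝ≥0∞ :=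
  ⨆ x : ℝ, ∑' k : ℤ, ENNReal.ofReal (|x - (k : ℝ)| ^ p * phiK σ (x - (k : ℝ)))

section Kernel

variable {σ : ℝ → ℝ} {p : ℝ}

theorem sum_range_rpow_mul_phiK_le (hσ : Sigmoidal σ) (hM : MomentFin σ p) (m : ℕ) (y : ℝ) :
    ∑ k ∈ Finset.range m, |y - k| ^ p * phiK σ (y - k) ≤ (absMoment σ p).toReal := by
  set f : ℤ → ℝ≥0∞ := fun k => ENNReal.ofReal (|y - (k : ℝ)| ^ p * phiK σ (y - (k : ℝ)))
  have hM' : absMoment σ p ≠ ⊤ := hM.ne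
  rw [← ENNReal.ofReal_le_iff_le_toReal hM', ENNReal.ofReal_sum_of_nonneg fun k _ =>
    mul_nonneg (Real.rpow_nonneg (abs_nonneg _) p) (hσ.phiK_nonneg _)]
  calc ∑ k ∈ Finset.range m, f k
      ≤ ∑' k : ℕ, f k := ENNReal.sum_le_tsum _
    _ ≤ ∑' k : ℤ, f k := ENNReal.tsum_comp_le_tsum_of_injective Nat.cast_injective f
    _ ≤ absMoment σ p := le_iSup (fun x : ℝ => ∑' k : ℤ,
          ENNReal.ofReal (|x - (k : ℝ)| ^ p * phiK σ (x - (k : ℝ)))) y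

theorem rpow_mul_phiK_le (hσ : Sigmoidal σ) (hM : MomentFin σ p) (u : ℝ) :
    |u| ^ p * phiK σ u ≤ (absMoment σ p).toReal := by
  simpa using sum_range_rpow_mul_phiK_le hσ hM 1 u

variable (μ : Measure ℝ) [IsFiniteMeasure μ]

theorem integrable_phiK_comp (hσ : Sigmoidal σ) (a b : ℝ) :
    Integrable (fun t => phiK σ (a * t - b)) μ := by
  refine .of_bound (hσ.measurable_phiK.comp (by fun_prop)).aestronglyMeasurable 1
    (ae_of_all _ fun t => ?_)
  rw [Real.norm_of_nonneg (hσ.phiK_nonneg _)]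
  exact hσ.phiK_le_one _

theorem integrable_rpow_mul_phiK_comp (hσ : Sigmoidal σ) (hM : MomentFin σ p) (a b : ℝ) :
    Integrable (fun t => |a * t - b| ^ p * phiK σ (a * t - b)) μ := by
  refine .of_bound ((by fun_prop : Measurable fun t => |a * t - b| ^ p).mul
    (hσ.measurable_phiK.comp (by fun_prop))).aestronglyMeasurable (absMoment σ p).toReal
    (ae_of_all _ fun t => ?_)
  rw [Real.norm_of_nonneg (mul_nonneg (Real.rpow_nonneg (abs_nonneg _) p) (hσ.phiK_nonneg _))]
  exact rpow_mul_phiK_le hσ hM _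

theorem integrable_abs_sub_rpow_mul_phiK_comp (hσ : Sigmoidal σ) {q : ℝ} (hq : 0 ≤ q) {x : ℝ}
    (hx : x ∈ Icc (0 : ℝ) 1) (a b : ℝ) :
    Integrable (fun t => |t - x| ^ q * phiK σ (a * t - b)) (μ.restrict (Icc 0 1)) := by
  refine .of_bound ((by fun_prop : Measurable fun t => |t - x| ^ q).mul
    (hσ.measurable_phiK.comp (by fun_prop))).aestronglyMeasurable 1 ?_
  filter_upwards [ae_restrict_mem measurableSet_Icc] with t ht
  have hdist : |t - x| ≤ 1 := abs_sub_le_iff.2 ⟨by linarith [ht.2, hx.1], by linarith [ht.1, hx.2]⟩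
  rw [Real.norm_of_nonneg (mul_nonneg (Real.rpow_nonneg (abs_nonneg _) q) (hσ.phiK_nonneg _))]
  exact mul_le_one₀ (Real.rpow_le_one (abs_nonneg _) hdist hq) (hσ.phiK_nonneg _)
    (hσ.phiK_le_one _)

end Kernel

def kernelMass (ρ : Measure ℝ) (σ : ℝ → ℝ) (n k : ℕ) : ℝ :=
  ∫ t in Icc (0 : ℝ) 1, phiK σ ((n : ℝ) * t - (k : ℝ)) ∂ρ

def kernelMoment (ρ : Measure ℝ) (σ : ℝ → ℝ) (p : ℝ) (n k : ℕ) : ℝ :=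
  ∫ t in Icc (0 : ℝ) 1, |(n : ℝ) * t - (k : ℝ)| ^ p * phiK σ ((n : ℝ) * t - (k : ℝ)) ∂ρ

def kernelAbsDev (ρ : Measure ℝ) (σ : ℝ → ℝ) (n k : ℕ) (x : ℝ) : ℝ :=
  ∫ t in Icc (0 : ℝ) 1, |t - x| * phiK σ ((n : ℝ) * t - (k : ℝ)) ∂ρ

theorem nnAbsMoment_eq (ρ : Measure ℝ) (σ : ℝ → ℝ) (n : ℕ) (x : ℝ) :
    nnAbsMoment ρ σ n x =
      (∑ k ∈ Finset.range (n + 1),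
          kernelAbsDev ρ σ n k x / kernelMass ρ σ n k * phiK σ ((n : ℝ) * x - (k : ℝ))) /
        ∑ k ∈ Finset.range (n + 1), phiK σ ((n : ℝ) * x - (k : ℝ)) :=
  rfl

section Operator

variable {σ : ℝ → ℝ} {ρ : Measure ℝ} [IsFiniteMeasure ρ] {p : ℝ}

theorem rpow_kernelAbsDev_div_kernelMass_le (hσ : Sigmoidal σ) (hp : 1 ≤ p)
    (hM : MomentFin σ p) {n : ℕ} (hn : 0 < n) (k : ℕ) {x : ℝ} (hx : x ∈ Icc (0 : ℝ) 1) :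
    (kernelAbsDev ρ σ n k x / kernelMass ρ σ n k) ^ p ≤
      2 ^ (p - 1) / (n : ℝ) ^ p *
        (kernelMoment ρ σ p n k / kernelMass ρ σ n k + |(n : ℝ) * x - k| ^ p) := by
  set D := kernelMass ρ σ n k
  set A := kernelMoment ρ σ p n k
  set c : ℝ := 2 ^ (p - 1) / (n : ℝ) ^ p
  set v : ℝ := |(n : ℝ) * x - k| ^ p
  have hψ := integrable_phiK_comp (ρ.restrict (Icc 0 1)) hσ n k
  have hD0 : 0 ≤ D := integral_nonneg fun t => hσ.phiK_nonneg _
  rcases hD0.eq_or_lt with hD | hD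
  · rw [← hD, div_zero, div_zero, zero_add, Real.zero_rpow (by linarith)]
    exact mul_nonneg (by positivity) (Real.rpow_nonneg (abs_nonneg _) p)
  have hJensen : kernelAbsDev ρ σ n k x ^ p ≤
      D ^ (p - 1) * ∫ t in Icc (0 : ℝ) 1, |t - x| ^ p * phiK σ (n * t - k) ∂ρ :=
    integral_mul_rpow_le hp (ae_of_all _ fun _ => abs_nonneg _)
      (ae_of_all _ fun _ => hσ.phiK_nonneg _) (by fun_prop) hψ
      (by simpa using integrable_abs_sub_rpow_mul_phiK_comp ρ hσ zero_le_one hx n k)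
      (integrable_abs_sub_rpow_mul_phiK_comp ρ hσ (by linarith) hx n k)
  have hsplit : ∫ t in Icc (0 : ℝ) 1, |t - x| ^ p * phiK σ (n * t - k) ∂ρ ≤ c * (A + v * D) := by
    have hA := integrable_rpow_mul_phiK_comp (ρ.restrict (Icc 0 1)) hσ hM n k
    calc ∫ t in Icc (0 : ℝ) 1, |t - x| ^ p * phiK σ (n * t - k) ∂ρ
        ≤ ∫ t in Icc (0 : ℝ) 1, (c * (|(n : ℝ) * t - k| ^ p * phiK σ (n * t - k)) +
            c * v * phiK σ (n * t - k)) ∂ρ :=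
          integral_mono (integrable_abs_sub_rpow_mul_phiK_comp ρ hσ (by linarith) hx n k)
            ((hA.const_mul c).add (hψ.const_mul (c * v))) fun t => by
              have := abs_sub_rpow_le hp (Nat.cast_pos.2 hn) t x k
              have := hσ.phiK_nonneg (n * t - k)
              nlinarith
      _ = c * (A + v * D) := by
          rw [integral_add (hA.const_mul c) (hψ.const_mul (c * v)), integral_const_mul,
            integral_const_mul]
          show c * A + c * v * D = _
          ring
  calc (kernelAbsDev ρ σ n k x / D) ^ p
      = kernelAbsDev ρ σ n k x ^ p / D ^ p :=
        Real.div_rpow (integral_nonneg fun t => mul_nonneg (abs_nonneg _) (hσ.phiK_nonneg _))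
          hD.le p
    _ ≤ D ^ (p - 1) * (c * (A + v * D)) / D ^ p := by
        gcongr
        exact hJensen.trans (mul_le_mul_of_nonneg_left hsplit (by positivity))
    _ = c * (A / D + v) := by
        rw [Real.rpow_sub_one hD.ne']
        field_simp

theorem rpow_nnAbsMoment_le (hσ : Sigmoidal σ) (hker : KernelStd σ) (hp : 1 ≤ p)
    (hM : MomentFin σ p) {n : ℕ} (hn : 0 < n) {x : ℝ} (hx : x ∈ Icc (0 : ℝ) 1) :
    |nnAbsMoment ρ σ n x| ^ p ≤
      2 ^ (p - 1) / (n : ℝ) ^ p * (∑ k ∈ Finset.range (n + 1),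
        (kernelMoment ρ σ p n k / kernelMass ρ σ n k * phiK σ ((n : ℝ) * x - k) +
          |(n : ℝ) * x - k| ^ p * phiK σ ((n : ℝ) * x - k))) / phiK σ 1 := by
  obtain ⟨-, hφ1, -, hlow⟩ := hker
  have hz : ∀ k, 0 ≤ kernelAbsDev ρ σ n k x / kernelMass ρ σ n k := fun k =>
    div_nonneg (integral_nonneg fun _ => mul_nonneg (abs_nonneg _) (hσ.phiK_nonneg _))
      (integral_nonneg fun _ => hσ.phiK_nonneg _)
  rw [nnAbsMoment_eq, abs_of_nonneg (div_nonneg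
    (Finset.sum_nonneg fun k _ => mul_nonneg (hz k) (hσ.phiK_nonneg _))
    (Finset.sum_nonneg fun k _ => hσ.phiK_nonneg _))]
  calc _ ≤ (∑ k ∈ Finset.range (n + 1), phiK σ ((n : ℝ) * x - k) *
          (kernelAbsDev ρ σ n k x / kernelMass ρ σ n k) ^ p) / phiK σ 1 :=
        Real.rpow_sum_mul_div_sum_le _ (fun _ _ => hσ.phiK_nonneg _) (fun k _ => hz k)
          hφ1 (hlow n x hx) hp
    _ ≤ (∑ k ∈ Finset.range (n + 1), phiK σ ((n : ℝ) * x - k) * (2 ^ (p - 1) / (n : ℝ) ^ p *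
          (kernelMoment ρ σ p n k / kernelMass ρ σ n k + |(n : ℝ) * x - k| ^ p))) /
            phiK σ 1 :=
        div_le_div_of_nonneg_right (Finset.sum_le_sum fun k _ => mul_le_mul_of_nonneg_left
          (rpow_kernelAbsDev_div_kernelMass_le hσ hp hM hn k hx) (hσ.phiK_nonneg _))
          hφ1.le
    _ = _ := by
        rw [Finset.mul_sum]
        congr 1
        exact Finset.sum_congr rfl fun k _ => by ring

theorem integral_kernelMoment_div_kernelMass_mul_add_le (hσ : Sigmoidal σ) (hM : MomentFin σ p)
    (n k : ℕ) :
    ∫ x in Icc (0 : ℝ) 1, (kernelMoment ρ σ p n k / kernelMass ρ σ n k *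
        phiK σ ((n : ℝ) * x - k) + |(n : ℝ) * x - k| ^ p * phiK σ ((n : ℝ) * x - k)) ∂ρ ≤
      2 * kernelMoment ρ σ p n k := by
  set D := kernelMass ρ σ n k
  set A := kernelMoment ρ σ p n k
  rw [integral_add ((integrable_phiK_comp _ hσ n k).const_mul _)
      (integrable_rpow_mul_phiK_comp _ hσ hM n k), integral_const_mul]
  show A / D * D + A ≤ 2 * A
  have hA : 0 ≤ A := integral_nonneg fun _ => mul_nonneg (Real.rpow_nonneg (abs_nonneg _) p)
    (hσ.phiK_nonneg _)
  have hD : 0 ≤ D := integral_nonneg fun _ => hσ.phiK_nonneg _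
  rcases hD.eq_or_lt with hD | hD
  · rw [← hD, mul_zero]
    linarith
  · rw [div_mul_cancel₀ _ hD.ne']
    linarith

theorem sum_kernelMoment_le (hσ : Sigmoidal σ) (hM : MomentFin σ p) (n : ℕ) :
    ∑ k ∈ Finset.range (n + 1), kernelMoment ρ σ p n k ≤
      (absMoment σ p).toReal * ρ.real (Icc 0 1) := by
  have hA := fun k : ℕ => integrable_rpow_mul_phiK_comp (ρ.restrict (Icc 0 1)) hσ hM n k
  calc ∑ k ∈ Finset.range (n + 1), kernelMoment ρ σ p n k
      = ∫ t in Icc (0 : ℝ) 1, ∑ k ∈ Finset.range (n + 1),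
          |(n : ℝ) * t - k| ^ p * phiK σ ((n : ℝ) * t - k) ∂ρ :=
        (integral_finsetSum _ fun k _ => hA k).symm
    _ ≤ ∫ _ in Icc (0 : ℝ) 1, (absMoment σ p).toReal ∂ρ :=
        integral_mono (integrable_finsetSum _ fun k _ => hA k) (integrable_const _) fun t =>
          sum_range_rpow_mul_phiK_le hσ hM (n + 1) (n * t)
    _ = (absMoment σ p).toReal * ρ.real (Icc 0 1) := by
        rw [setIntegral_const, smul_eq_mul, mul_comm]

theorem integral_rpow_nnAbsMoment_le (hσ : Sigmoidal σ) (hker : KernelStd σ) (hp : 1 ≤ p)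
    (hM : MomentFin σ p) {n : ℕ} (hn : 0 < n) :
    ∫ x in Icc (0 : ℝ) 1, |nnAbsMoment ρ σ n x| ^ p ∂ρ ≤
      2 ^ p * (absMoment σ p).toReal * ρ.real (Icc 0 1) / phiK σ 1 / (n : ℝ) ^ p := by
  have hφ1 := hker.2.1
  have hg (k : ℕ) : Integrable (fun x => kernelMoment ρ σ p n k / kernelMass ρ σ n k *
      phiK σ ((n : ℝ) * x - k) + |(n : ℝ) * x - k| ^ p * phiK σ ((n : ℝ) * x - k))
      (ρ.restrict (Icc 0 1)) :=
    ((integrable_phiK_comp _ hσ n k).const_mul _).add (integrable_rpow_mul_phiK_comp _ hσ hM n k)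
  calc ∫ x in Icc (0 : ℝ) 1, |nnAbsMoment ρ σ n x| ^ p ∂ρ
      ≤ ∫ x in Icc (0 : ℝ) 1, 2 ^ (p - 1) / (n : ℝ) ^ p * (∑ k ∈ Finset.range (n + 1),
          (kernelMoment ρ σ p n k / kernelMass ρ σ n k * phiK σ ((n : ℝ) * x - k) +
            |(n : ℝ) * x - k| ^ p * phiK σ ((n : ℝ) * x - k))) / phiK σ 1 ∂ρ := by
        refine integral_mono_of_nonneg (ae_of_all _ fun _ => by positivity)
          (((integrable_finsetSum _ fun k _ => hg k).const_mul _).div_const _) ?_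
        filter_upwards [ae_restrict_mem measurableSet_Icc] with x hx
        exact rpow_nnAbsMoment_le hσ hker hp hM hn hx
    _ = 2 ^ (p - 1) / (n : ℝ) ^ p * (∑ k ∈ Finset.range (n + 1), ∫ x in Icc (0 : ℝ) 1,
          (kernelMoment ρ σ p n k / kernelMass ρ σ n k * phiK σ ((n : ℝ) * x - k) +
            |(n : ℝ) * x - k| ^ p * phiK σ ((n : ℝ) * x - k)) ∂ρ) / phiK σ 1 := by
        rw [integral_div, integral_const_mul, integral_finsetSum _ fun k _ => hg k]
    _ ≤ 2 ^ (p - 1) / (n : ℝ) ^ p *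
          (∑ k ∈ Finset.range (n + 1), 2 * kernelMoment ρ σ p n k) / phiK σ 1 := by
        gcongr with k
        exact integral_kernelMoment_div_kernelMass_mul_add_le hσ hM n k
    _ ≤ 2 ^ (p - 1) / (n : ℝ) ^ p *
          (2 * ((absMoment σ p).toReal * ρ.real (Icc 0 1))) / phiK σ 1 := by
        rw [← Finset.mul_sum]
        gcongr
        exact sum_kernelMoment_le hσ hM n
    _ = 2 ^ p * (absMoment σ p).toReal * ρ.real (Icc 0 1) / phiK σ 1 / (n : ℝ) ^ p := by
        rw [Real.rpow_sub_one two_ne_zero]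
        field_simp

end Operator

/-- if `M_p(φ_σ) < ∞` then `‖S_n^ρ(|t − x|)(x)‖_{L^p(I,ρ)} ≤ C/n`. -/
theorem statement5 (σ : ℝ → ℝ) (hσ : Sigmoidal σ) (hker : KernelStd σ)
    (ρ : Measure ℝ) [IsFiniteMeasure ρ]
    (p : ℝ) (hp : 1 ≤ p) (hM : MomentFin σ p) :
    ∃ C > (0 : ℝ), ∀ n : ℕ, 0 < n →
      LpNorm1 ρ p (nnAbsMoment ρ σ n) ≤ C / n := by
  set B := 2 ^ p * (absMoment σ p).toReal * ρ.real (Icc 0 1) / phiK σ 1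
  have hB : 0 ≤ B := by
    have hφ1 := hker.2.1
    positivity
  refine ⟨B ^ (1 / p) + 1, by positivity, fun n hn => ?_⟩
  have hn' : (0 : ℝ) < n := Nat.cast_pos.2 hn
  have hp0 : 0 < p := by linarith
  calc LpNorm1 ρ p (nnAbsMoment ρ σ n)
      ≤ (B / (n : ℝ) ^ p) ^ (1 / p) :=
        Real.rpow_le_rpow (integral_nonneg fun _ => by positivity)
          (integral_rpow_nnAbsMoment_le hσ hker hp hM hn) (by positivity)
    _ = B ^ (1 / p) / n := by
        rw [Real.div_rpow hB (by positivity), ← Real.rpow_mul hn'.le, mul_one_div_cancel hp0.ne',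
          Real.rpow_one]
    _ ≤ (B ^ (1 / p) + 1) / n := by
        gcongr
        linarith
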